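/- If w is a μ-biworld and φ ∈ COEL is a formula with modal depth MD(φ) ≤ μ, then w resolves φ, i.e. φ^w ≠ u. -/

import Mathlib

open Ordinal

/-- Three truth values: true, false, unknown. -/
inductive TV : Type
  | t | f | u
deriving DecidableEq

namespace TV

/-- Inverse of a truth value. -/
def inv : TV → TV
  | t => f
  | f => t
  | u => u

/-- Binary greatest lower bound in the truth order f ≤ₜ u ≤ₜ t. -/
def tmin : TV → TV → TV
  | f, _ => f
  | _, f => f
  | u, _ => u
  | _, u => u
  | t, t => t

/-- Truth value of a proposition. -/
noncomputable def ofProp (p : Prop) : TV := by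
  classical
  exact if p then t else f

/-- Greatest lower bound of a set of truth values in the truth order f ≤ₜ u ≤ₜ t. -/
noncomputable def tglbSet (s : Set TV) : TV := by
  classical
  exact if f ∈ s then f else if u ∈ s then u else t

/-- Least upper bound of a (chain) set of truth values in the precision order
u ≤ₚ t, u ≤ₚ f. -/
noncomputable def plubSet (s : Set TV) : TV := by
  classical
  exact if t ∈ s then t else if f ∈ s then f else u

/-- Precision order on truth values: u below everything. -/
def ple (a b : TV) : Prop := a = u ∨ a = b

end TV

/-- Formulas of the language COEL. -/
inductive Form (Agent Atom : Type) : Type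
  | atom : Atom → Form Agent Atom
  | neg : Form Agent Atom → Form Agent Atom
  | and : Form Agent Atom → Form Agent Atom → Form Agent Atom
  | K : Agent → Form Agent Atom → Form Agent Atom
  | M : Agent → Form Agent Atom → Form Agent Atom
  | E : Set Agent → Form Agent Atom → Form Agent Atom
  | C : Set Agent → Form Agent Atom → Form Agent Atom

/-- Iterated `E_G` operator: `Eiter G 0 φ = φ`, `Eiter G (k+1) φ = E_G (Eiter G k φ)`. -/
def Form.Eiter {Agent Atom : Type} (G : Set Agent) : ℕ → Form Agent Atom → Form Agent Atom
  | 0, φ => φ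
  | k + 1, φ => .E G (Form.Eiter G k φ)

/-- Modal depth of a COEL formula. -/
noncomputable def Form.MD {Agent Atom : Type} : Form Agent Atom → Ordinal.{0}
  | .atom _ => 0
  | .neg φ => φ.MD
  | .and φ ψ => max φ.MD ψ.MD
  | .K _ φ => φ.MD + 1
  | .M _ φ => φ.MD + 1
  | .E _ φ => φ.MD + 1
  | .C _ φ => φ.MD + omega0

/-- A system of prebiworlds over agents `Agent` and propositional vocabulary `Atom`,
packaging the transfinite construction of μ-prebiworlds for all countable ordinals μ,
together with the recursive equations defining restriction. -/
structure PrebSys (Agent Atom : Type) where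
  /-- the collection of all prebiworlds (of all depths) -/
  W : Type 1
  /-- the depth of a prebiworld -/
  depth : W → Ordinal.{0}
  depth_countable : ∀ w, (depth w).card ≤ Cardinal.aleph0
  /-- the objective interpretation of a prebiworld -/
  obj : W → Set Atom
  /-- for a (μ+1)-prebiworld, the set A^w of μ-prebiworlds deemed (extendibly) possible -/
  poss : Agent → W → Set W
  /-- for a (μ+1)-prebiworld, the set Ā^w of μ-prebiworlds deemed (extendibly) impossible -/
  imposs : Agent → W → Set W
  /-- for a limit-depth prebiworld, its component (w)_α at α < depth w -/
  comp : W → Ordinal.{0} → W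
  /-- the restriction w|_α of w to depth α ≤ depth w -/
  restrict : W → Ordinal.{0} → W
  depth_poss : ∀ (A : Agent) (w v : W), v ∈ poss A w → depth w = depth v + 1
  depth_imposs : ∀ (A : Agent) (w v : W), v ∈ imposs A w → depth w = depth v + 1
  depth_comp : ∀ (w : W) (α : Ordinal.{0}), Order.IsSuccLimit (depth w) → α < depth w →
    depth (comp w α) = α
  comp_mono : ∀ (w : W) (α β : Ordinal.{0}), Order.IsSuccLimit (depth w) → α ≤ β → β < depth w →
    restrict (comp w β) α = comp w α
  ext_zero : ∀ w w' : W, depth w = 0 → depth w' = 0 → obj w = obj w' → w = w'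
  ext_succ : ∀ (w w' : W) (μ : Ordinal.{0}), depth w = μ + 1 → depth w' = μ + 1 →
    obj w = obj w' → (∀ A, poss A w = poss A w') → (∀ A, imposs A w = imposs A w') → w = w'
  ext_limit : ∀ w w' : W, Order.IsSuccLimit (depth w) → depth w' = depth w →
    (∀ α < depth w, comp w α = comp w' α) → w = w'
  depth_restrict : ∀ (w : W) (α : Ordinal.{0}), α ≤ depth w → depth (restrict w α) = α
  restrict_zero : ∀ w : W, obj (restrict w 0) = obj w
  restrict_limit : ∀ (w : W) (α β : Ordinal.{0}), Order.IsSuccLimit α → α ≤ depth w → β < α →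
    comp (restrict w α) β = restrict w β
  restrict_succ_limit : ∀ (w : W) (α : Ordinal.{0}), Order.IsSuccLimit (depth w) →
    α + 1 ≤ depth w → restrict w (α + 1) = comp w (α + 1)
  restrict_succ_obj : ∀ (w : W) (μ α : Ordinal.{0}), depth w = μ + 1 → α + 1 ≤ depth w →
    obj (restrict w (α + 1)) = obj w
  restrict_succ_poss : ∀ (w : W) (μ α : Ordinal.{0}) (A : Agent), depth w = μ + 1 →
    α + 1 ≤ depth w →
    poss A (restrict w (α + 1)) = (fun v => restrict v α) '' poss A w
  restrict_succ_imposs : ∀ (w : W) (μ α : Ordinal.{0}) (A : Agent), depth w = μ + 1 →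
    α + 1 ≤ depth w →
    imposs A (restrict w (α + 1)) = (fun v => restrict v α) '' imposs A w

/-- The precision order: v ≤ₚ w iff w restricted to the depth of v equals v. -/
def PrebSys.lep {Agent Atom : Type} (S : PrebSys Agent Atom) (v w : S.W) : Prop :=
  S.depth v ≤ S.depth w ∧ S.restrict w (S.depth v) = v

/-- A system of biworlds: prebiworlds together with the simultaneously
(transfinite-recursively) defined predicates `Biworld` and `Incompleted`
and their defining clauses. -/
structure BiSys (Agent Atom : Type) extends PrebSys Agent Atom where
  Biworld : W → Prop
  Incompleted : W → Prop
  biworld_zero : ∀ w : W, depth w = 0 → Biworld w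
  biworld_succ : ∀ (w : W) (μ : Ordinal.{0}), depth w = μ + 1 →
    (Biworld w ↔ ∀ A : Agent,
      poss A w ∪ imposs A w = {v | depth v = μ ∧ Biworld v} ∧
      ∀ v ∈ poss A w ∩ imposs A w, Incompleted v)
  biworld_limit : ∀ w : W, Order.IsSuccLimit (depth w) →
    (Biworld w ↔ ∀ α < depth w, Biworld (comp w α))
  incompleted_iff : ∀ w : W, Incompleted w ↔
    ∃ v₁ v₂ : W, v₁ ≠ v₂ ∧ Biworld v₁ ∧ Biworld v₂ ∧
      depth v₁ = depth w + 1 ∧ depth v₂ = depth w + 1 ∧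
      PrebSys.lep toPrebSys w v₁ ∧ PrebSys.lep toPrebSys w v₂

/-- A biworld is completed if it is not incompleted. -/
def BiSys.Completed {Agent Atom : Type} (S : BiSys Agent Atom) (w : S.W) : Prop :=
  ¬ S.Incompleted w

/-- For a limit-depth prebiworld w, the set A↑w. -/
def BiSys.upPoss {Agent Atom : Type} (S : BiSys Agent Atom) (A : Agent) (w : S.W) :
    Set S.W :=
  {v | S.depth v = S.depth w ∧ ∀ α < S.depth w, S.comp v α ∈ S.poss A (S.comp w (α + 1))}

/-- For a limit-depth prebiworld w, the set Ā↑w. -/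
def BiSys.upImposs {Agent Atom : Type} (S : BiSys Agent Atom) (A : Agent) (w : S.W) :
    Set S.W :=
  {v | S.depth v = S.depth w ∧ ∀ α < S.depth w, S.comp v α ∈ S.imposs A (S.comp w (α + 1))}

/-- A system of biworlds together with the three-valued valuation of COEL formulas
and its defining equations. -/
structure ValSys (Agent Atom : Type) extends BiSys Agent Atom where
  val : Form Agent Atom → W → TV
  val_atom : ∀ (P : Atom) (w : W), val (.atom P) w = TV.ofProp (P ∈ obj w)
  val_neg : ∀ (φ : Form Agent Atom) (w : W), val (.neg φ) w = (val φ w).inv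
  val_and : ∀ (φ ψ : Form Agent Atom) (w : W),
    val (.and φ ψ) w = (val φ w).tmin (val ψ w)
  val_K_zero : ∀ (A : Agent) (φ : Form Agent Atom) (w : W), depth w = 0 →
    val (.K A φ) w = TV.u
  val_K_succ : ∀ (A : Agent) (φ : Form Agent Atom) (w : W) (μ : Ordinal.{0}),
    depth w = μ + 1 → val (.K A φ) w = TV.tglbSet (val φ '' poss A w)
  val_K_limit : ∀ (A : Agent) (φ : Form Agent Atom) (w : W), Order.IsSuccLimit (depth w) →
    val (.K A φ) w = TV.plubSet {x | ∃ α < depth w, x = val (.K A φ) (comp w α)}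
  val_M_zero : ∀ (A : Agent) (φ : Form Agent Atom) (w : W), depth w = 0 →
    val (.M A φ) w = TV.u
  val_M_succ : ∀ (A : Agent) (φ : Form Agent Atom) (w : W) (μ : Ordinal.{0}),
    depth w = μ + 1 →
    val (.M A φ) w = TV.tglbSet ((fun v => (val φ v).inv) '' imposs A w)
  val_M_limit : ∀ (A : Agent) (φ : Form Agent Atom) (w : W), Order.IsSuccLimit (depth w) →
    val (.M A φ) w = TV.plubSet {x | ∃ α < depth w, x = val (.M A φ) (comp w α)}
  val_E : ∀ (G : Set Agent) (φ : Form Agent Atom) (w : W),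
    val (.E G φ) w = TV.tglbSet {x | ∃ A ∈ G, x = val (.K A φ) w}
  val_C : ∀ (G : Set Agent) (φ : Form Agent Atom) (w : W),
    val (.C G φ) w = TV.tglbSet {x | ∃ k : ℕ, 1 ≤ k ∧ x = val (Form.Eiter G k φ) w}

/-- A world: a completed (ω²+1)-biworld. -/
def ValSys.World {Agent Atom : Type} (S : ValSys Agent Atom) (w : S.W) : Prop :=
  S.Biworld w ∧ S.depth w = omega0 ^ 2 + 1 ∧ S.toBiSys.Completed w

/-- Accessibility in the canonical Kripke structure K*: w R_A w' iff w'|_{ω²} ∈ A^w. -/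
def ValSys.Racc {Agent Atom : Type} (S : ValSys Agent Atom) (A : Agent)
    (w w' : S.W) : Prop :=
  S.restrict w' (omega0 ^ 2) ∈ S.poss A w

/-- Two-valued Kripke valuation on the canonical Kripke structure K* of worlds. -/
def ValSys.kval {Agent Atom : Type} (S : ValSys Agent Atom) :
    Form Agent Atom → S.W → Prop
  | .atom P, w => P ∈ S.obj w
  | .neg φ, w => ¬ S.kval φ w
  | .and φ ψ, w => S.kval φ w ∧ S.kval ψ w
  | .K A φ, w => ∀ w', S.World w' → S.Racc A w w' → S.kval φ w'
  | .M A φ, w => ∀ w', S.World w' → S.kval φ w' → S.Racc A w w'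
  | .E G φ, w => ∀ A ∈ G, ∀ w', S.World w' → S.Racc A w w' → S.kval φ w'
  | .C G φ, w => ∀ w', Relation.TransGen (fun x y => S.World y ∧ ∃ A ∈ G, S.Racc A x y) w w' →
      S.kval φ w'

/-!
Induction on `φ`. Connectives preserve resolvedness pointwise. For `K_A φ` and `M_A φ` at a
successor depth `ν + 1 ≥ MD φ + 1`, the biworld condition makes every world in `A^w` and `Ā^w`
a biworld of depth `ν ≥ MD φ`, so the glb is taken over resolved values; at a limit depth the
plub is witnessed by the component of successor depth `MD φ + 1`, which falls under the
successor case. `E_G` is a glb of `K_A`'s, and `C_G φ` is a glb of the `E_G^k φ`, whose modal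
depths `MD φ + k` stay below `MD φ + ω`.
-/

namespace TV

lemma inv_ne_u {a : TV} (h : a ≠ u) : a.inv ≠ u := by
  cases a <;> simp_all [inv]

lemma tmin_ne_u {a b : TV} (ha : a ≠ u) (hb : b ≠ u) : a.tmin b ≠ u := by
  cases a <;> cases b <;> simp_all [tmin]

lemma ofProp_ne_u (p : Prop) : ofProp p ≠ u := by
  unfold ofProp
  split <;> simp

lemma tglbSet_ne_u {s : Set TV} (h : u ∉ s) : tglbSet s ≠ u := by
  unfold tglbSet
  split <;> simp_all

lemma plubSet_ne_u {s : Set TV} {x : TV} (hx : x ∈ s) (h : x ≠ u) : plubSet s ≠ u := by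
  unfold plubSet
  cases x <;> split_ifs <;> simp_all

end TV

namespace BiSys

variable {Agent Atom : Type} (S : BiSys Agent Atom)

lemma biworld_of_mem_poss_union_imposs {w v : S.W} {A : Agent} {ν : Ordinal.{0}}
    (hw : S.Biworld w) (hd : S.depth w = ν + 1) (hv : v ∈ S.poss A w ∪ S.imposs A w) :
    S.Biworld v ∧ S.depth v = ν := by
  rw [((S.biworld_succ w ν hd).mp hw A).1] at hv
  exact ⟨hv.2, hv.1⟩

lemma ne_u_of_ne_u_of_depth_eq_succ {f : S.W → TV} {β : Ordinal.{0}}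
    (hsucc : ∀ v ν, S.Biworld v → S.depth v = ν + 1 → β ≤ ν → f v ≠ TV.u)
    (hlim : ∀ v, Order.IsSuccLimit (S.depth v) →
      f v = TV.plubSet {x | ∃ α < S.depth v, x = f (S.comp v α)})
    {w : S.W} (hw : S.Biworld w) (h : β + 1 ≤ S.depth w) : f w ≠ TV.u := by
  obtain h0 | ⟨ν, hν⟩ | hl := Ordinal.zero_or_succ_or_isSuccLimit (S.depth w)
  · rw [h0, ← Order.succ_eq_add_one] at h
    exact absurd h (Order.succ_le_iff.not.mpr not_lt_zero)
  · rw [← hν, ← Order.succ_eq_add_one, Order.succ_le_succ_iff] at h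
    exact hsucc w ν hw (by rw [← hν, Order.succ_eq_add_one]) h
  · have hlt : β + 1 < S.depth w := by
      rw [← Order.succ_eq_add_one] at h ⊢
      exact hl.succ_lt (Order.succ_le_iff.mp h)
    rw [hlim w hl]
    refine TV.plubSet_ne_u ⟨β + 1, hlt, rfl⟩ (hsucc _ β ?_ (S.depth_comp w _ hl hlt) le_rfl)
    exact (S.biworld_limit w hl).mp hw _ hlt

end BiSys

lemma Form.MD_Eiter {Agent Atom : Type} (G : Set Agent) (φ : Form Agent Atom) (k : ℕ) :
    (Form.Eiter G k φ).MD = φ.MD + k := by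
  induction k with
  | zero => simp [Form.Eiter]
  | succ n ih => rw [Form.Eiter, Form.MD, ih, Nat.cast_succ, add_assoc]

namespace ValSys

variable {Agent Atom : Type} (S : ValSys Agent Atom)

def Resolved (φ : Form Agent Atom) : Prop :=
  ∀ w, S.Biworld w → φ.MD ≤ S.depth w → S.val φ w ≠ TV.u

variable {S}

lemma resolved_atom (P : Atom) : S.Resolved (.atom P) := fun w _ _ => by
  rw [S.val_atom]
  exact TV.ofProp_ne_u _

lemma Resolved.neg {φ : Form Agent Atom} (hφ : S.Resolved φ) : S.Resolved (.neg φ) :=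
  fun w hw h => by
    rw [S.val_neg]
    exact TV.inv_ne_u (hφ w hw h)

lemma Resolved.and {φ ψ : Form Agent Atom} (hφ : S.Resolved φ) (hψ : S.Resolved ψ) :
    S.Resolved (.and φ ψ) := fun w hw h => by
  rw [Form.MD, max_le_iff] at h
  rw [S.val_and]
  exact TV.tmin_ne_u (hφ w hw h.1) (hψ w hw h.2)

lemma Resolved.K {φ : Form Agent Atom} (hφ : S.Resolved φ) (A : Agent) :
    S.Resolved (.K A φ) := by
  refine fun w hw h => S.ne_u_of_ne_u_of_depth_eq_succ ?_ (S.val_K_limit A φ) hw h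
  intro v ν hv hd hle
  rw [S.val_K_succ A φ v ν hd]
  refine TV.tglbSet_ne_u fun ⟨x, hx, hxu⟩ => ?_
  obtain ⟨hxb, hxd⟩ := S.biworld_of_mem_poss_union_imposs hv hd (Or.inl hx)
  exact hφ x hxb (hxd ▸ hle) hxu

lemma Resolved.M {φ : Form Agent Atom} (hφ : S.Resolved φ) (A : Agent) :
    S.Resolved (.M A φ) := by
  refine fun w hw h => S.ne_u_of_ne_u_of_depth_eq_succ ?_ (S.val_M_limit A φ) hw h
  intro v ν hv hd hle
  rw [S.val_M_succ A φ v ν hd]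
  refine TV.tglbSet_ne_u fun ⟨x, hx, hxu⟩ => ?_
  obtain ⟨hxb, hxd⟩ := S.biworld_of_mem_poss_union_imposs hv hd (Or.inr hx)
  exact TV.inv_ne_u (hφ x hxb (hxd ▸ hle)) hxu

lemma Resolved.E {φ : Form Agent Atom} (hφ : S.Resolved φ) (G : Set Agent) :
    S.Resolved (.E G φ) := fun w hw h => by
  rw [S.val_E]
  exact TV.tglbSet_ne_u fun ⟨A, _, hA⟩ => hφ.K A w hw h hA.symm

lemma Resolved.Eiter {φ : Form Agent Atom} (hφ : S.Resolved φ) (G : Set Agent) (k : ℕ) :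
    S.Resolved (Form.Eiter G k φ) := by
  induction k with
  | zero => exact hφ
  | succ n ih => exact ih.E G

lemma Resolved.C {φ : Form Agent Atom} (hφ : S.Resolved φ) (G : Set Agent) :
    S.Resolved (.C G φ) := fun w hw h => by
  rw [S.val_C]
  refine TV.tglbSet_ne_u fun ⟨k, _, hk⟩ => hφ.Eiter G k w hw ?_ hk.symm
  calc (Form.Eiter G k φ).MD = φ.MD + k := Form.MD_Eiter G φ k
    _ ≤ φ.MD + omega0 := add_le_add_right (Ordinal.natCast_lt_omega0 k).le _
    _ ≤ S.depth w := h

lemma resolved (φ : Form Agent Atom) : S.Resolved φ := by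
  induction φ with
  | atom P => exact resolved_atom P
  | neg φ hφ => exact hφ.neg
  | and φ ψ hφ hψ => exact hφ.and hψ
  | K A φ hφ => exact hφ.K A
  | M A φ hφ => exact hφ.M A
  | E G φ hφ => exact hφ.E G
  | C G φ hφ => exact hφ.C G

end ValSys

/-- a μ-biworld resolves every formula of modal depth at most μ. -/
theorem resolves_of_MD_le {Agent Atom : Type} (S : ValSys Agent Atom) (w : S.W)
    (hb : S.Biworld w) (φ : Form Agent Atom) (h : φ.MD ≤ S.depth w) :
    S.val φ w ≠ TV.u :=
  S.resolved φ w hb h
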